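/- Fix l > 0 and n ≥ 1. For λ = (λ₁,…,λ_n) with λ₁ > ⋯ > λ_n > 0 and w = (w₁,…,w_n) with w_j > 0 and Σ_{j=1}^n w_j < 1, set λ₀ = 0 and w₀ = 1 − Σ_{j=1}^n w_j, and define complex numbers κ₀,…,κ_{2n+1} as the coefficients of Σ_{j=0}^{2n+1} κ_j z^j = z·∏_{j=1}^n (z² − λ_j²) − i·l·Σ_{j=0}^n w_j ∏_{0≤k≤n, k≠j} (z² − λ_k²). (This polynomial equals det(zI − 𝒥 − i·l·I_{1×1}) when (λ_j, w_j) are the spectral data of the corresponding (2n+1)×(2n+1) zero-diagonal Jacobi matrix 𝒥.) Then the odd-index coefficients κ_{2j+1} are real and the even-index coefficients κ_{2j} are purely imaginary, and |det ∂(Im κ₀, Re κ₁, …, Im κ_{2n−2}, Re κ_{2n−1})/∂(λ₁,…,λ_n,w₁,…,w_n)| = 2^n l^n ∏_{j=1}^n λ_j³ · ∏_{1≤j<k≤n} |λ_j² − λ_k²|². -/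

import Mathlib

open MeasureTheory Matrix Polynomial Finset

/-- The polynomial `z·∏ (z² - λ_j²) - i·l·Σ_{j=0}^n w_j ∏_{k≠j} (z² - λ_k²)` (with
`λ₀ = 0`), which is `det(zI - 𝒥 - i·l·I₁ₓ₁)` when `(λ_j, w_j)` are the spectral data of
the corresponding `(2n+1) × (2n+1)` zero-diagonal Jacobi matrix `𝒥`. -/
noncomputable def kappaPolyOC (n : ℕ) (l : ℝ) (lam : Fin n → ℝ) (w : Fin n → ℝ) (w₀ : ℝ) :
    Polynomial ℂ :=
  X * ∏ j : Fin n, (X ^ 2 - C ((lam j : ℂ) ^ 2)) -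
    C (Complex.I * (l : ℂ)) * (C ((w₀ : ℂ)) * ∏ j : Fin n, (X ^ 2 - C ((lam j : ℂ) ^ 2)) +
      ∑ j : Fin n, C ((w j : ℂ)) * X ^ 2 *
        ∏ k ∈ Finset.univ.erase j, (X ^ 2 - C ((lam k : ℂ) ^ 2)))

/-- `kappaPolyOC` as a function of a single vector `x ∈ ℝ^(2n)` of variables
`(λ₁,…,λ_n, w₁,…,w_n)`, with `w₀ := 1 - Σ_j w_j`. -/
noncomputable def kappaMapOC (n : ℕ) (l : ℝ) (x : Fin (2 * n) → ℝ) : Polynomial ℂ :=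
  kappaPolyOC n l
    (fun j : Fin n => x ⟨(j : ℕ), by have := j.isLt; omega⟩)
    (fun j : Fin n => x ⟨n + (j : ℕ), by have := j.isLt; omega⟩)
    (1 - ∑ k : Fin n, x ⟨n + (k : ℕ), by have := k.isLt; omega⟩)

/-- The real vector `(Im κ₀, Re κ₁, Im κ₂, …)`: component `i` is `Im κ_i` for even `i`
and `Re κ_i` for odd `i`. -/
noncomputable def kappaReImO (n : ℕ) (l : ℝ) (x : Fin (2 * n) → ℝ) (i : Fin (2 * n)) : ℝ :=
  if (i : ℕ) % 2 = 0 then ((kappaMapOC n l x).coeff (i : ℕ)).im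
  else ((kappaMapOC n l x).coeff (i : ℕ)).re

/-!
With `μ_j = λ_j²`, `Q = ∏ (y - μ_j)` and `P_k = ∏_{j ≠ k} (y - μ_j)`, the polynomial is
`z Q(z²) - i l R(z²)`, where eliminating `w₀ = 1 - Σ w_k` with `y P_k = Q + μ_k P_k` gives
`R = Q + Σ w_k μ_k P_k`. Hence `κ_{2j+1} = Q_j` is real and `κ_{2j} = -i l R_j` is imaginary.
The odd coefficients do not depend on `w`, so ordering the rows as (odd, even) and the columns
as (λ, w) makes the Jacobian block triangular, with diagonal blocks `C · diag(-2 λ_m)` and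
`C · diag(-l μ_m)`, where `C` is the coefficient matrix of `P_1, …, P_n`. Finally
`V(μ) · C = diag(P_m(μ_m))` for the Vandermonde matrix `V(μ)`, which yields
`det C = ∏_{i<j} (μ_i - μ_j)`.
-/

open Lagrange

theorem Lagrange.nodal_update {R ι : Type*} [CommRing R] [DecidableEq ι] {s : Finset ι} {m : ι}
    (hm : m ∈ s) (v : ι → R) (a : R) :
    nodal s (Function.update v m a) = (X - C a) * nodal (s.erase m) v := by
  rw [nodal_eq_mul_nodal_erase hm, Function.update_self]
  congr 1
  exact Finset.prod_congr rfl fun k hk => by rw [Function.update_of_ne (ne_of_mem_erase hk)]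

section CoeffMatrix

variable {R : Type*} [CommRing R] {n : ℕ}

def coeffMatrix (p : Fin n → R[X]) : Matrix (Fin n) (Fin n) R :=
  Matrix.of fun j m => (p m).coeff j

theorem vandermonde_mul_coeffMatrix (v : Fin n → R) (p : Fin n → R[X])
    (hp : ∀ m, (p m).natDegree < n) :
    vandermonde v * coeffMatrix p = Matrix.of fun k m => (p m).eval (v k) := by
  ext k m
  rw [Matrix.mul_apply, Matrix.of_apply, eval_eq_sum_range' (hp m), ← Fin.sum_univ_eq_sum_range]
  simp only [vandermonde_apply, coeffMatrix, Matrix.of_apply, mul_comm]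

theorem det_coeffMatrix_nodal_erase [IsDomain R] (μ : Fin n → R) :
    (coeffMatrix fun m => nodal (univ.erase m) μ).det = ∏ i, ∏ j ∈ Ioi i, (μ i - μ j) := by
  by_cases hμ : Function.Injective μ
  · have hV : (vandermonde μ).det ≠ 0 := det_vandermonde_ne_zero_iff.mpr hμ
    have hdiag : vandermonde μ * coeffMatrix (fun m => nodal (univ.erase m) μ) =
        diagonal fun m => ∏ k ∈ univ.erase m, (μ m - μ k) := by
      rw [vandermonde_mul_coeffMatrix]
      · ext k m
        rw [Matrix.of_apply, eval_nodal, diagonal_apply]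
        split_ifs with hkm
        · rw [hkm]
        · exact prod_eq_zero (mem_erase.mpr ⟨hkm, mem_univ k⟩) (sub_self _)
      · intro m
        have : 0 < n := m.pos
        simp only [natDegree_nodal, card_erase_of_mem (mem_univ m), card_univ, Fintype.card_fin]
        omega
    apply mul_left_cancel₀ hV
    rw [← det_mul, hdiag, det_diagonal, det_vandermonde, ← prod_mul_distrib]
    simp_rw [← prod_mul_distrib, ← compl_singleton]
    rw [← prod_prod_Ioi_mul_eq_prod_prod_off_diag]
    exact prod_congr rfl fun _ _ => prod_congr rfl fun _ _ => mul_comm _ _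
  · obtain ⟨i, j, hij, hne⟩ := Function.not_injective_iff.mp hμ
    wlog hlt : i < j generalizing i j
    · exact this j i hij.symm hne.symm (hne.lt_or_gt.resolve_left hlt)
    have hcol : nodal (univ.erase i) μ = nodal (univ.erase j) μ := by
      apply mul_left_cancel₀ (X_sub_C_ne_zero (μ i))
      rw [← nodal_eq_mul_nodal_erase (mem_univ i), hij, ← nodal_eq_mul_nodal_erase (mem_univ j)]
    rw [det_zero_of_column_eq hne fun k => by simp only [coeffMatrix, Matrix.of_apply, hcol]]
    exact (prod_eq_zero (mem_univ i) (prod_eq_zero (mem_Ioi.mpr hlt) (sub_eq_zero.mpr hij))).symm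

end CoeffMatrix

section Interleave

variable {R : Type*} [CommRing R] (f g : R[X]) (j : ℕ)

theorem coeff_X_mul_expand_two_add_expand_two_odd :
    (X * expand R 2 f + expand R 2 g).coeff (2 * j + 1) = f.coeff j := by
  rw [coeff_add, coeff_X_mul, coeff_expand_mul' two_pos,
    coeff_expand two_pos, if_neg (by omega), add_zero]

theorem coeff_X_mul_expand_two_add_expand_two_even :
    (X * expand R 2 f + expand R 2 g).coeff (2 * j) = g.coeff j := by
  rw [coeff_add, coeff_expand_mul' two_pos, add_eq_right]
  rcases j with _ | j
  · exact coeff_X_mul_zero _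
  · rw [show 2 * (j + 1) = 2 * j + 1 + 1 by ring, coeff_X_mul, coeff_expand two_pos,
      if_neg (by omega)]

end Interleave

theorem hasDerivAt_sum_update_mul {ι : Type*} [Fintype ι] [DecidableEq ι] (w c : ι → ℝ)
    (m : ι) (t : ℝ) :
    HasDerivAt (fun s => ∑ k, Function.update w m s k * c k) (c m) t := by
  have h := HasDerivAt.fun_sum (u := univ) fun k _ =>
    (hasDerivAt_pi.mp (hasDerivAt_update w m t) k).mul_const (c k)
  simpa [Pi.single_apply] using h

noncomputable def partialDerivMatrix {ι κ : Type*} [DecidableEq ι]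
    (f : (ι → ℝ) → κ → ℝ) (x : ι → ℝ) : Matrix κ ι ℝ :=
  Matrix.of fun i j => deriv (fun t => f (Function.update x j t) i) (x j)

namespace KappaOC

variable {n : ℕ}

def lamIdx (j : Fin n) : Fin (2 * n) := ⟨j, by omega⟩
def wIdx (j : Fin n) : Fin (2 * n) := ⟨n + j, by omega⟩
def oddIdx (j : Fin n) : Fin (2 * n) := ⟨2 * j + 1, by omega⟩
def evenIdx (j : Fin n) : Fin (2 * n) := ⟨2 * j, by omega⟩

noncomputable def sumEquivOfInjective (f g : Fin n → Fin (2 * n))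
    (h : Function.Injective (Sum.elim f g)) : Fin n ⊕ Fin n ≃ Fin (2 * n) :=
  Equiv.ofBijective _ ((Fintype.bijective_iff_injective_and_card _).mpr ⟨h, by simp [two_mul]⟩)

noncomputable def colEquiv : Fin n ⊕ Fin n ≃ Fin (2 * n) :=
  sumEquivOfInjective lamIdx wIdx <| by
    rintro (a | a) (b | b) h <;> simp [lamIdx, wIdx, Fin.ext_iff] at h ⊢ <;> omega

noncomputable def rowEquiv : Fin n ⊕ Fin n ≃ Fin (2 * n) :=
  sumEquivOfInjective oddIdx evenIdx <| by
    rintro (a | a) (b | b) h <;> simp [oddIdx, evenIdx, Fin.ext_iff] at h ⊢ <;> omega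

def lamPart (x : Fin (2 * n) → ℝ) : Fin n → ℝ := x ∘ lamIdx
def wPart (x : Fin (2 * n) → ℝ) : Fin n → ℝ := x ∘ wIdx

section Update

variable (x : Fin (2 * n) → ℝ) (m : Fin n) (t : ℝ)

theorem lamPart_update_lamIdx :
    lamPart (Function.update x (lamIdx m) t) = Function.update (lamPart x) m t :=
  Function.update_comp_eq_of_injective _ (fun a b h => by simpa [lamIdx, Fin.ext_iff] using h) _ _

theorem lamPart_update_wIdx : lamPart (Function.update x (wIdx m) t) = lamPart x :=
  Function.update_comp_eq_of_forall_ne _ _ fun j => by simp [lamIdx, wIdx, Fin.ext_iff]; omega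

theorem wPart_update_wIdx :
    wPart (Function.update x (wIdx m) t) = Function.update (wPart x) m t :=
  Function.update_comp_eq_of_injective _ (fun a b h => by simpa [wIdx, Fin.ext_iff] using h) _ _

end Update

noncomputable def oddPoly (lam : Fin n → ℝ) : ℝ[X] :=
  nodal univ (lam ^ 2)

noncomputable def evenPoly (lam w : Fin n → ℝ) : ℝ[X] :=
  oddPoly lam + ∑ k, C (w k * lam k ^ 2) * nodal (univ.erase k) (lam ^ 2)

theorem evenPoly_eq (lam w : Fin n → ℝ) :
    evenPoly lam w = C (1 - ∑ k, w k) * oddPoly lam +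
      ∑ k, C (w k) * X * nodal (univ.erase k) (lam ^ 2) := by
  have hX : ∀ k, X * nodal (univ.erase k) (lam ^ 2) =
      oddPoly lam + C (lam k ^ 2) * nodal (univ.erase k) (lam ^ 2) := fun k => by
    rw [oddPoly, nodal_eq_mul_nodal_erase (mem_univ k), Pi.pow_apply]; ring
  simp_rw [mul_assoc, hX, mul_add, sum_add_distrib, evenPoly, map_sub, map_one, map_sum,
    sub_mul, one_mul, sum_mul, map_mul, mul_assoc]
  abel

theorem kappaMapOC_eq (l : ℝ) (x : Fin (2 * n) → ℝ) :
    kappaMapOC n l x = X * expand ℂ 2 ((oddPoly (lamPart x)).map (algebraMap ℝ ℂ)) +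
      expand ℂ 2 (C (-(Complex.I * l)) *
        (evenPoly (lamPart x) (wPart x)).map (algebraMap ℝ ℂ)) := by
  rw [evenPoly_eq]
  simp only [kappaMapOC, kappaPolyOC, oddPoly, nodal, lamPart, wPart, lamIdx, wIdx,
    Function.comp_apply, Pi.pow_apply, Polynomial.map_add, Polynomial.map_sub, Polynomial.map_mul,
    Polynomial.map_one, Polynomial.map_pow, Polynomial.map_prod, Polynomial.map_sum, map_X, map_C,
    Complex.coe_algebraMap, Complex.ofReal_sub, Complex.ofReal_one, Complex.ofReal_sum, map_add,
    map_sub, map_mul, map_neg, map_one, map_pow, map_prod, map_sum, expand_X, expand_C, neg_mul]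
  ring

theorem coeff_kappaMapOC_odd (l : ℝ) (x : Fin (2 * n) → ℝ) (j : ℕ) :
    (kappaMapOC n l x).coeff (2 * j + 1) = (oddPoly (lamPart x)).coeff j := by
  rw [kappaMapOC_eq, coeff_X_mul_expand_two_add_expand_two_odd, coeff_map,
    Complex.coe_algebraMap]

theorem coeff_kappaMapOC_even (l : ℝ) (x : Fin (2 * n) → ℝ) (j : ℕ) :
    (kappaMapOC n l x).coeff (2 * j) =
      -(Complex.I * l) * (evenPoly (lamPart x) (wPart x)).coeff j := by
  rw [kappaMapOC_eq, coeff_X_mul_expand_two_add_expand_two_even, coeff_C_mul, coeff_map,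
    Complex.coe_algebraMap]

theorem kappaReImO_oddIdx (l : ℝ) (x : Fin (2 * n) → ℝ) (j : Fin n) :
    kappaReImO n l x (oddIdx j) = (oddPoly (lamPart x)).coeff j := by
  rw [kappaReImO, if_neg (by simp [oddIdx])]
  simp [oddIdx, coeff_kappaMapOC_odd]

theorem kappaReImO_evenIdx (l : ℝ) (x : Fin (2 * n) → ℝ) (j : Fin n) :
    kappaReImO n l x (evenIdx j) = -(l * (evenPoly (lamPart x) (wPart x)).coeff j) := by
  rw [kappaReImO, if_pos (by simp [evenIdx])]
  simp [evenIdx, coeff_kappaMapOC_even]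

theorem oddPoly_update (lam : Fin n → ℝ) (m : Fin n) (t : ℝ) :
    oddPoly (Function.update lam m t) = (X - C (t ^ 2)) * nodal (univ.erase m) (lam ^ 2) := by
  rw [oddPoly, ← nodal_update (mem_univ m)]
  congr
  funext j
  exact Function.apply_update (fun _ s => s ^ 2) lam m t j

section Jacobian

variable (l : ℝ) (x : Fin (2 * n) → ℝ) (j m : Fin n)

theorem partialDerivMatrix_oddIdx_lamIdx :
    partialDerivMatrix (kappaReImO n l) x (oddIdx j) (lamIdx m) =
      (nodal (univ.erase m) (lamPart x ^ 2)).coeff j * -(2 * lamPart x m) := by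
  set P := nodal (univ.erase m) (lamPart x ^ 2)
  have hf : (fun t => kappaReImO n l (Function.update x (lamIdx m) t) (oddIdx j)) =
      fun t => (X * P).coeff j - t ^ 2 * P.coeff j := by
    funext t
    rw [kappaReImO_oddIdx, lamPart_update_lamIdx, oddPoly_update, sub_mul, coeff_sub, coeff_C_mul]
  have hd := ((hasDerivAt_pow 2 (lamPart x m)).mul_const (P.coeff j)).const_sub ((X * P).coeff j)
  rw [partialDerivMatrix, Matrix.of_apply, hf]
  exact hd.deriv.trans (by norm_num; ring)

theorem partialDerivMatrix_oddIdx_wIdx :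
    partialDerivMatrix (kappaReImO n l) x (oddIdx j) (wIdx m) = 0 := by
  simp only [partialDerivMatrix, Matrix.of_apply, kappaReImO_oddIdx, lamPart_update_wIdx,
    deriv_const]

theorem partialDerivMatrix_evenIdx_wIdx :
    partialDerivMatrix (kappaReImO n l) x (evenIdx j) (wIdx m) =
      (nodal (univ.erase m) (lamPart x ^ 2)).coeff j * -(l * lamPart x m ^ 2) := by
  set c : Fin n → ℝ := fun k => lamPart x k ^ 2 * (nodal (univ.erase k) (lamPart x ^ 2)).coeff j
  have hf : (fun t => kappaReImO n l (Function.update x (wIdx m) t) (evenIdx j)) =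
      fun t => -(l * ((oddPoly (lamPart x)).coeff j +
        ∑ k, Function.update (wPart x) m t k * c k)) := by
    funext t
    rw [kappaReImO_evenIdx, lamPart_update_wIdx, wPart_update_wIdx, evenPoly, coeff_add,
      finsetSum_coeff]
    simp only [coeff_C_mul, mul_assoc, c]
  have hd := (((hasDerivAt_sum_update_mul (wPart x) c m (wPart x m)).const_add
    ((oddPoly (lamPart x)).coeff j)).const_mul l).neg
  rw [partialDerivMatrix, Matrix.of_apply, hf]
  exact hd.deriv.trans (by ring)

theorem abs_det_partialDerivMatrix_kappaReImO :
    |(partialDerivMatrix (kappaReImO n l) x).det| =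
      |(∏ m, -(2 * lamPart x m)) * ∏ m, -(l * lamPart x m ^ 2)| *
        |(coeffMatrix fun m => nodal (univ.erase m) (lamPart x ^ 2)).det| ^ 2 := by
  set J := partialDerivMatrix (kappaReImO n l) x
  set P := coeffMatrix fun m => nodal (univ.erase m) (lamPart x ^ 2)
  have hblock : J.submatrix rowEquiv colEquiv =
      fromBlocks (P * diagonal fun m => -(2 * lamPart x m)) 0
        (Matrix.of fun j m => J (evenIdx j) (lamIdx m))
        (P * diagonal fun m => -(l * lamPart x m ^ 2)) := by
    ext (j | j) (m | m)
    · rw [fromBlocks_apply₁₁, mul_diagonal]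
      exact partialDerivMatrix_oddIdx_lamIdx l x j m
    · exact partialDerivMatrix_oddIdx_wIdx l x j m
    · rfl
    · rw [fromBlocks_apply₂₂, mul_diagonal]
      exact partialDerivMatrix_evenIdx_wIdx l x j m
  rw [← abs_det_submatrix_equiv_equiv rowEquiv colEquiv, hblock, det_fromBlocks_zero₁₂,
    det_mul, det_mul, det_diagonal, det_diagonal, abs_mul, abs_mul, abs_mul, abs_mul]
  ring

end Jacobian

end KappaOC

open KappaOC

/-- for `det(zI - 𝒥 - i·l·I₁ₓ₁)` in the odd case, the odd-index
coefficients are real and the even-index coefficients purely imaginary, and the Jacobian of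
`(λ₁,…,λ_n, w₁,…,w_n) ↦ (Im κ₀, Re κ₁, …, Im κ_{2n-2}, Re κ_{2n-1})` has absolute value
`2^n l^n ∏ λ_j³ ∏_{j<k} |λ_j² - λ_k²|²`. -/
theorem jacobian_nonhermitian_odd (n : ℕ) (l : ℝ) (hl : 0 < l)
    (x : Fin (2 * n) → ℝ)
    (lam : Fin n → ℝ) (hlam : lam = fun j : Fin n => x ⟨(j : ℕ), by have := j.isLt; omega⟩)
    (hpos : ∀ j, 0 < lam j) :
    (∀ j : ℕ, ((kappaMapOC n l x).coeff (2 * j + 1)).im = 0 ∧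
      ((kappaMapOC n l x).coeff (2 * j)).re = 0) ∧
    |(Matrix.of fun i j : Fin (2 * n) =>
        deriv (fun t => kappaReImO n l (Function.update x j t) i) (x j)).det| =
      2 ^ n * l ^ n * (∏ j, lam j ^ 3) *
        ∏ j : Fin n, ∏ k ∈ Finset.Ioi j, |lam j ^ 2 - lam k ^ 2| ^ 2 := by
  refine ⟨fun j => ⟨by simp [coeff_kappaMapOC_odd], by simp [coeff_kappaMapOC_even]⟩, ?_⟩
  change lam = lamPart x at hlam
  subst hlam
  have hprod : (∏ m, -(2 * lamPart x m)) * ∏ m, -(l * lamPart x m ^ 2) =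
      ∏ m, 2 * l * lamPart x m ^ 3 := by
    rw [← prod_mul_distrib]
    exact prod_congr rfl fun m _ => by ring
  rw [show Matrix.of _ = partialDerivMatrix (kappaReImO n l) x from rfl,
    abs_det_partialDerivMatrix_kappaReImO, det_coeffMatrix_nodal_erase, hprod,
    abs_of_pos (prod_pos fun m _ => by have := hpos m; positivity), prod_mul_distrib, prod_const,
    card_univ, Fintype.card_fin, mul_pow]
  simp only [abs_prod, ← prod_pow, Pi.pow_apply]
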